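/- Let n be even and λ a spiky function on E_n such that no transversal X has X and E_n − X in the same component of G_λ. Then λ is the connectivity function of a matroid. -/

import Mathlib

/-- The ground set of a rank-`n` spike: `n` disjoint legs, where the leg `i` consists of
`x_i = (i, true)` and `y_i = (i, false)`. -/
abbrev En (n : ℕ) := Fin n × Bool

/-- The `i`-th leg `L_i = {x_i, y_i}`. -/
def leg (n : ℕ) (i : Fin n) : Set (En n) := {(i, true), (i, false)}

/-- A transversal: a set containing exactly one element of each leg. -/
def IsTransversal {n : ℕ} (X : Set (En n)) : Prop :=
  ∀ i : Fin n, ((i, true) ∈ X ∧ (i, false) ∉ X) ∨ ((i, true) ∉ X ∧ (i, false) ∈ X)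

/-- The hypercube graph `H_n` on transversals: two transversals are adjacent iff they
differ in exactly one element (i.e. their symmetric difference has two elements). -/
def Hn (n : ℕ) : SimpleGraph (Set (En n)) where
  Adj X Y := IsTransversal X ∧ IsTransversal Y ∧ (symmDiff X Y).ncard = 2
  symm := ⟨fun X Y ⟨h1, h2, h3⟩ => ⟨h2, h1, by rwa [symmDiff_comm]⟩⟩
  loopless := ⟨fun X ⟨_, _, h3⟩ => by
    simp [symmDiff_self, Set.bot_eq_empty] at h3⟩

/-- `I` is an independent set of the hypercube graph `H_n`. -/
def IndepInHn (n : ℕ) (I : Set (Set (En n))) : Prop :=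
  (∀ X ∈ I, IsTransversal X) ∧ ∀ X ∈ I, ∀ Y ∈ I, ¬ (Hn n).Adj X Y

/-- `l(X)`: the number of legs which `X` meets. -/
noncomputable def legCount {n : ℕ} (X : Set (En n)) : ℕ :=
  Set.ncard {i : Fin n | (i, true) ∈ X ∨ (i, false) ∈ X}

/-- The rank of a set `X` in a matroid `M`: the largest cardinality of an independent
subset of `X`. -/
noncomputable def mrank {α : Type*} (M : Matroid α) (X : Set α) : ℕ :=
  sSup {k | ∃ I, M.Indep I ∧ I ⊆ X ∧ I.ncard = k}

/-- The connectivity function of a matroid: μ_M(X) = r(X) + r(E−X) − r(E). -/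
noncomputable def mconn {α : Type*} (M : Matroid α) (X : Set α) : ℤ :=
  (mrank M X : ℤ) + (mrank M (M.E \ X) : ℤ) - (mrank M M.E : ℤ)

/-- A circuit of a matroid: a minimal dependent subset of the ground set. -/
def IsCircuit {α : Type*} (M : Matroid α) (C : Set α) : Prop :=
  C ⊆ M.E ∧ ¬ M.Indep C ∧ ∀ D ⊂ C, M.Indep D

/-- The circuits `{x_i, y_i, x_j, y_j}` for `i < j` (i.e. unions of two distinct legs). -/
def LegPairs (n : ℕ) : Set (Set (En n)) :=
  {C | ∃ i j : Fin n, i ≠ j ∧ C = leg n i ∪ leg n j}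

/-- The circuit collection of the spike `S(I)`: unions of two legs, the transversals
in `I`, and all `(n+1)`-element sets containing none of the preceding circuits. -/
def SpikeCircuits (n : ℕ) (I : Set (Set (En n))) : Set (Set (En n)) :=
  (LegPairs n ∪ I) ∪ {C | C.ncard = n + 1 ∧ ∀ D ∈ LegPairs n ∪ I, ¬ D ⊆ C}

open Classical in
/-- The rank function of the free spike `S(∅)` (every rank-`n` spike has this rank
function away from the transversals). -/
noncomputable def freeSpikeRank (n : ℕ) (X : Set (En n)) : ℕ :=
  if ∀ i : Fin n, ¬ Disjoint (leg n i) X then n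
  else if ∃ i, leg n i ⊆ X then legCount X + 1
  else X.ncard

/-- `λ_n(X) = r_n(X) + r_n(E_n − X) − n`: the common value of the connectivity function
of any rank-`n` spike on a non-transversal set `X`. -/
noncomputable def lamN (n : ℕ) (X : Set (En n)) : ℤ :=
  (freeSpikeRank n X : ℤ) + (freeSpikeRank n Xᶜ : ℤ) - (n : ℤ)

/-- A spiky function: symmetric, extends `λ_n` on non-transversals, takes values in
`{n−2, n−1, n}` on transversals, and satisfies `λ(X) + λ(Y) ≥ 2n−2` for transversals
`X`, `Y` differing in exactly one element. -/
noncomputable def IsSpiky (n : ℕ) (lam : Set (En n) → ℕ) : Prop :=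
  (∀ X, lam X = lam Xᶜ) ∧
  (∀ X, ¬ IsTransversal X → (lam X : ℤ) = lamN n X) ∧
  (∀ X, IsTransversal X → lam X = n - 2 ∨ lam X = n - 1 ∨ lam X = n) ∧
  (∀ X Y, IsTransversal X → IsTransversal Y → (symmDiff X Y).ncard = 2 →
    2 * n - 2 ≤ lam X + lam Y)

/-- The induced subgraph of `G` on the vertex set `S` (other vertices become isolated). -/
def inducedOn {α : Type*} (G : SimpleGraph α) (S : Set α) : SimpleGraph α where
  Adj a b := G.Adj a b ∧ a ∈ S ∧ b ∈ S
  symm := ⟨fun a b ⟨h, ha, hb⟩ => ⟨h.symm, hb, ha⟩⟩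
  loopless := ⟨fun a ⟨h, _, _⟩ => G.loopless.irrefl a h⟩

/-- `G_λ`: the induced subgraph of `H_n` on the transversals `X` with `λ(X) = n − 1`. -/
noncomputable def Glam (n : ℕ) (lam : Set (En n) → ℕ) : SimpleGraph (Set (En n)) :=
  inducedOn (Hn n) {Z | lam Z = n - 1}

/-!
For an independent set `I` of `H_n`, the spike `S(I)`, whose independent sets are the sets of
at most `n` elements that contain at most one full leg and are not in `I`, is a matroid
(augmentation uses that two members of `I` are never adjacent). Its rank is `n - 1` on `I` and the
free-spike rank `min {n, l(X) + 1, |X|}` elsewhere, so its connectivity function is `λ_n` off the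
transversals and `n - |I ∩ {X, E_n - X}|` on them.

It remains to choose `I`. Order the components of `G_λ` arbitrarily and call `X` *low* if its
component precedes that of `E_n - X`; by hypothesis exactly one of `X`, `E_n - X` is low, and
lowness is constant on components. Let `I` consist of the transversals with `λ = n - 2` and those
with `λ = n - 1` whose number of `x_i`'s is even iff they are low. Two adjacent members of `I`
would both have `λ = n - 1` by the spiky inequality, hence lie in one component of `G_λ`, yet
have numbers of `x_i`'s of opposite parity. As `n` is even, `X` and `E_n - X` have equal parity,
so exactly one of them is in `I` when `λ(X) = n - 1`.
-/

open Set
open scoped symmDiff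

lemma Set.ncard_symmDiff_add_two_mul {α : Type*} {A B : Set α} (hA : A.Finite) (hB : B.Finite) :
    (A ∆ B).ncard + 2 * (A ∩ B).ncard = A.ncard + B.ncard := by
  have h1 := ncard_inter_add_ncard_sdiff_eq_ncard A B hA
  have h2 := ncard_inter_add_ncard_sdiff_eq_ncard B A hB
  rw [inter_comm] at h2
  rw [Set.symmDiff_def, ncard_union_eq disjoint_sdiff_sdiff hA.sdiff hB.sdiff]
  omega

theorem SimpleGraph.exists_side_of_involutive {V : Type*} {G : SimpleGraph V} (φ : G →g G)
    (hφ : Function.Involutive φ) : ∃ side : V → Prop, (∀ u v, G.Adj u v → (side u ↔ side v)) ∧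
      ∀ v, ¬ G.Reachable v (φ v) → (side (φ v) ↔ ¬ side v) := by
  let _ : LinearOrder G.ConnectedComponent := WellOrderingRel.isWellOrder.linearOrder
  refine ⟨fun v => G.connectedComponentMk v < G.connectedComponentMk (φ v), fun u v huv => ?_,
    fun v hv => ?_⟩
  · dsimp only
    rw [ConnectedComponent.eq.2 huv.reachable, ConnectedComponent.eq.2 (huv.reachable.map φ)]
  · have hne : G.connectedComponentMk v ≠ G.connectedComponentMk (φ v) :=
      fun h => hv (ConnectedComponent.eq.1 h)
    simp only [hφ v]
    exact ⟨lt_asymm, fun h => (not_lt.1 h).lt_of_ne hne.symm⟩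

lemma mrank_eq_of_forall_le {α : Type*} {M : Matroid α} {X : Set α} {r : ℕ}
    (hle : ∀ J, M.Indep J → J ⊆ X → J.ncard ≤ r) (hr : ∃ J, M.Indep J ∧ J ⊆ X ∧ J.ncard = r) :
    mrank M X = r :=
  IsGreatest.csSup_eq ⟨hr, by rintro _ ⟨J, hJ, hJX, rfl⟩; exact hle J hJ hJX⟩

variable {n : ℕ}

def fullLegs (X : Set (En n)) : Set (Fin n) := {i | (i, true) ∈ X ∧ (i, false) ∈ X}

def trueLegs (X : Set (En n)) : Set (Fin n) := {i | (i, true) ∈ X}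

lemma leg_subset_iff {X : Set (En n)} {i : Fin n} : leg n i ⊆ X ↔ i ∈ fullLegs X :=
  pair_subset_iff

lemma not_disjoint_leg_iff {X : Set (En n)} {i : Fin n} :
    ¬ Disjoint (leg n i) X ↔ (i, true) ∈ X ∨ (i, false) ∈ X := by
  simp only [leg, disjoint_insert_left, disjoint_singleton_left, not_and, not_not]
  tauto

lemma ncard_leg (i : Fin n) : (leg n i).ncard = 2 :=
  ncard_pair (by simp)

lemma fullLegs_mono {X Y : Set (En n)} (h : X ⊆ Y) : fullLegs X ⊆ fullLegs Y :=
  fun _ hi => ⟨h hi.1, h hi.2⟩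

lemma legCount_le_legCount_of_forall {X Y : Set (En n)}
    (h : ∀ e ∈ X, (e.1, true) ∈ Y ∨ (e.1, false) ∈ Y) : legCount X ≤ legCount Y :=
  ncard_le_ncard fun i hi => hi.elim (h _) (h _)

lemma legCount_mono {X Y : Set (En n)} (h : X ⊆ Y) : legCount X ≤ legCount Y :=
  legCount_le_legCount_of_forall fun e he => by
    obtain ⟨i, b⟩ := e
    cases b <;> simp [h he]

lemma legCount_le (X : Set (En n)) : legCount X ≤ n :=
  (ncard_le_ncard (subset_univ _)).trans_eq (by simp)

lemma legCount_eq_of_forall {X : Set (En n)} (h : ∀ i : Fin n, (i, true) ∈ X ∨ (i, false) ∈ X) :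
    legCount X = n := by
  calc legCount X = (univ : Set (Fin n)).ncard := congrArg ncard (eq_univ_of_forall h)
    _ = n := by simp

/-- Every leg met by `X` contributes one element to `X`, and a full leg a second one. -/
lemma ncard_eq_legCount_add (X : Set (En n)) : X.ncard = legCount X + (fullLegs X).ncard := by
  have hX : (·, true) '' {i | (i, true) ∈ X} ∪ (·, false) '' {i | (i, false) ∈ X} = X := by
    ext ⟨i, b⟩
    cases b <;> simp
  have hdisj : Disjoint ((·, true) '' {i : Fin n | (i, true) ∈ X})
      ((·, false) '' {i | (i, false) ∈ X}) := by
    simp [disjoint_left]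
  have := ncard_union_eq hdisj
  rw [hX, ncard_image_of_injective _ (Prod.mk_left_injective _),
    ncard_image_of_injective _ (Prod.mk_left_injective _)] at this
  exact this.trans (ncard_union_add_ncard_inter _ _).symm

lemma fullLegs_insert_subset (X : Set (En n)) (e : En n) :
    fullLegs (insert e X) ⊆ insert e.1 (fullLegs X) := by
  obtain ⟨j, b⟩ := e
  rintro i ⟨h1, h2⟩
  simp only [mem_insert_iff, Prod.mk.injEq] at h1 h2 ⊢
  cases b <;> simp_all [fullLegs]

lemma fullLegs_insert_subset_of_notMem {X : Set (En n)} {e : En n} (he : (e.1, !e.2) ∉ X) :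
    fullLegs (insert e X) ⊆ fullLegs X := by
  obtain ⟨j, b⟩ := e
  rintro i ⟨h1, h2⟩
  simp only [mem_insert_iff, Prod.mk.injEq] at h1 h2
  refine ⟨h1.resolve_left ?_, h2.resolve_left ?_⟩ <;> rintro ⟨rfl, rfl⟩ <;> simp_all

lemma IsTransversal.fullLegs_eq_empty {X : Set (En n)} (hX : IsTransversal X) :
    fullLegs X = ∅ :=
  eq_empty_of_forall_notMem fun i hi => by rcases hX i with h | h; exacts [h.2 hi.2, h.1 hi.1]

lemma IsTransversal.legCount_eq {X : Set (En n)} (hX : IsTransversal X) : legCount X = n :=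
  legCount_eq_of_forall fun i => (hX i).imp And.left And.right

lemma IsTransversal.ncard_eq {X : Set (En n)} (hX : IsTransversal X) : X.ncard = n := by
  rw [ncard_eq_legCount_add, hX.legCount_eq, hX.fullLegs_eq_empty, ncard_empty, add_zero]

lemma IsTransversal.compl {X : Set (En n)} (hX : IsTransversal X) : IsTransversal Xᶜ := fun i => by
  have := hX i
  simp only [mem_compl_iff]
  tauto

lemma not_isTransversal_of_fullLegs_nonempty {X : Set (En n)} (h : (fullLegs X).Nonempty) :
    ¬ IsTransversal X := fun hX => by
  simp [hX.fullLegs_eq_empty] at h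

lemma IsTransversal.symmDiff_eq {X Y : Set (En n)} (hX : IsTransversal X) (hY : IsTransversal Y) :
    X ∆ Y = (trueLegs X ∆ trueLegs Y) ×ˢ univ := by
  ext ⟨i, b⟩
  have := hX i
  have := hY i
  cases b <;> simp only [mem_symmDiff, trueLegs, mem_prod, mem_univ, and_true, mem_ofPred_eq]
  tauto

lemma even_ncard_trueLegs_iff_of_adj {X Y : Set (En n)} (h : (Hn n).Adj X Y) :
    Even (trueLegs X).ncard ↔ ¬ Even (trueLegs Y).ncard := by
  obtain ⟨hX, hY, hXY⟩ := h
  rw [hX.symmDiff_eq hY, ncard_prod, ncard_univ, Nat.card_eq_fintype_card, Fintype.card_bool]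
    at hXY
  have := ncard_symmDiff_add_two_mul (toFinite (trueLegs X)) (toFinite (trueLegs Y))
  have hodd : Odd ((trueLegs X).ncard + (trueLegs Y).ncard) :=
    ⟨(trueLegs X ∩ trueLegs Y).ncard, by omega⟩
  rw [Nat.odd_add, ← Nat.not_even_iff_odd] at hodd
  tauto

lemma even_ncard_trueLegs_compl (heven : Even n) (X : Set (En n)) :
    Even (trueLegs Xᶜ).ncard ↔ Even (trueLegs X).ncard := by
  have h := ncard_add_ncard_compl (trueLegs X)
  rw [Nat.card_eq_fintype_card, Fintype.card_fin] at h
  rw [← h, Nat.even_add] at heven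
  exact heven.symm

def SpikeIndep (I : Set (Set (En n))) (J : Set (En n)) : Prop :=
  J.ncard ≤ n ∧ (fullLegs J).ncard ≤ 1 ∧ J ∉ I

section SpikeIndep

variable {I : Set (Set (En n))} {J K : Set (En n)}

lemma SpikeIndep.ncard_le_legCount_add_one (hJ : SpikeIndep I J) : J.ncard ≤ legCount J + 1 := by
  have := ncard_eq_legCount_add J
  have := hJ.2.1
  omega

lemma SpikeIndep.subset (hI : ∀ X ∈ I, IsTransversal X) (hK : SpikeIndep I K) (hJK : J ⊆ K) :
    SpikeIndep I J := by
  obtain ⟨hcard, hfull, hKI⟩ := hK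
  have hle := ncard_le_ncard hJK
  refine ⟨hle.trans hcard, (ncard_le_ncard (fullLegs_mono hJK)).trans hfull, fun hJI => hKI ?_⟩
  have hJn := (hI J hJI).ncard_eq
  rwa [← eq_of_subset_of_ncard_le hJK (by omega)]

lemma ncard_symmDiff_insert_insert {X : Set (En n)} {e e' : En n} (he : e ∉ X) (he' : e' ∉ X)
    (hne : e ≠ e') : (insert e X ∆ insert e' X).ncard = 2 := by
  have : insert e X ∆ insert e' X = {e, e'} := by
    ext x
    simp only [mem_symmDiff, mem_insert_iff, mem_singleton_iff]
    constructor
    · rintro (⟨rfl | hx, hx'⟩ | ⟨rfl | hx, hx'⟩) <;> tauto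
    · rintro (rfl | rfl) <;> aesop
  rw [this, ncard_pair hne]

lemma SpikeIndep.exists_insert (hI : IndepInHn n I) (hJ : SpikeIndep I J) (hK : SpikeIndep I K)
    (hlt : J.ncard < K.ncard) : ∃ e ∈ K, e ∉ J ∧ SpikeIndep I (insert e J) := by
  by_contra! hcon
  have hcard : ∀ e ∉ J, (insert e J).ncard ≤ n := fun e he => by
    rw [ncard_insert_of_notMem he]
    exact hlt.trans_le hK.1
  rcases (fullLegs J).eq_empty_or_nonempty with hF | ⟨i, hi⟩
  · have hmem : ∀ e ∈ K, e ∉ J → insert e J ∈ I := fun e heK heJ => by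
      by_contra h
      refine hcon e heK heJ ⟨hcard e heJ, ?_, h⟩
      calc (fullLegs (insert e J)).ncard ≤ (insert e.1 (fullLegs J)).ncard :=
            ncard_le_ncard (fullLegs_insert_subset J e)
        _ = 1 := by simp [hF]
    obtain ⟨e, heK, heJ⟩ : (K \ J).Nonempty := by
      rw [nonempty_iff_ne_empty, Ne, sdiff_eq_empty]
      exact fun h => (ncard_le_ncard h).not_gt hlt
    by_cases htwo : ∃ e' ∈ K, e' ∉ J ∧ e' ≠ e
    · obtain ⟨e', he'K, he'J, hne⟩ := htwo
      have h1 := hmem e heK heJ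
      have h2 := hmem e' he'K he'J
      exact hI.2 _ h1 _ h2
        ⟨hI.1 _ h1, hI.1 _ h2, ncard_symmDiff_insert_insert heJ he'J hne.symm⟩
    · push Not at htwo
      have hKsub : K ⊆ insert e J := fun x hx => by
        by_cases hxJ : x ∈ J
        · exact mem_insert_of_mem _ hxJ
        · exact htwo x hx hxJ ▸ mem_insert _ _
      refine hK.2.2 ?_
      rw [eq_of_subset_of_ncard_le hKsub (by rw [ncard_insert_of_notMem heJ]; omega)]
      exact hmem e heK heJ
  · -- each `e ∈ K \ J` must complete a second full leg, so `K` meets no leg that `J` misses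
    have hpartner : ∀ e ∈ K, e ∉ J → (e.1, !e.2) ∈ J := fun e heK heJ => by
      by_contra h
      refine hcon e heK heJ ⟨hcard e heJ,
        (ncard_le_ncard (fullLegs_insert_subset_of_notMem h)).trans hJ.2.1, fun hmem => ?_⟩
      exact not_isTransversal_of_fullLegs_nonempty ⟨i, fullLegs_mono (subset_insert _ _) hi⟩
        (hI.1 _ hmem)
    have hleg : legCount K ≤ legCount J := legCount_le_legCount_of_forall fun e heK => by
      obtain ⟨j, b⟩ := e
      by_cases heJ : (j, b) ∈ J
      · cases b <;> simp [heJ]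
      · have := hpartner _ heK heJ
        cases b <;> simp_all
    have hKJ := ncard_eq_legCount_add K
    have hJK := ncard_eq_legCount_add J
    have hfull : 0 < (fullLegs J).ncard := (ncard_pos).2 ⟨i, hi⟩
    have := hK.2.1
    omega

end SpikeIndep

theorem exists_matroid_indep_iff_spikeIndep (hn : 0 < n) {I : Set (Set (En n))}
    (hI : IndepInHn n I) : ∃ M : Matroid (En n), M.E = univ ∧ ∀ J, M.Indep J ↔ SpikeIndep I J := by
  have hempty : SpikeIndep I ∅ := ⟨by simp, by simp [fullLegs], fun h => by
    have := (hI.1 _ h).ncard_eq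
    simp only [ncard_empty] at this
    omega⟩
  refine ⟨(IndepMatroid.ofFinite finite_univ (SpikeIndep I) hempty
    (fun _ _ hK hJK => hK.subset hI.1 hJK) (fun _ _ hJ hK hlt => hJ.exists_insert hI hK hlt)
    (fun _ _ => subset_univ _)).matroid, rfl, fun _ => Iff.rfl⟩

lemma freeSpikeRank_of_forall {X : Set (En n)} (h : ∀ i : Fin n, (i, true) ∈ X ∨ (i, false) ∈ X) :
    freeSpikeRank n X = n := by
  rw [freeSpikeRank, if_pos fun i => not_disjoint_leg_iff.2 (h i)]

lemma freeSpikeRank_eq_min (X : Set (En n)) :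
    freeSpikeRank n X = min n (min (legCount X + 1) X.ncard) := by
  have hX := ncard_eq_legCount_add X
  have hle := legCount_le X
  unfold freeSpikeRank
  split_ifs with hmet hfull
  · have := legCount_eq_of_forall fun i => not_disjoint_leg_iff.1 (hmet i)
    omega
  · obtain ⟨i, hi⟩ := not_forall.1 hmet
    have hlt : legCount X < n := by
      refine (ncard_lt_ncard (ssubset_univ_iff.2 ?_)).trans_eq (by simp)
      exact (ne_univ_iff_exists_notMem _).2 ⟨i, fun h => hi (not_disjoint_leg_iff.2 h)⟩
    obtain ⟨j, hj⟩ := hfull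
    have : 0 < (fullLegs X).ncard := (ncard_pos).2 ⟨j, leg_subset_iff.1 hj⟩
    omega
  · have : fullLegs X = ∅ := eq_empty_of_forall_notMem fun i hi => hfull ⟨i, leg_subset_iff.2 hi⟩
    rw [this, ncard_empty] at hX
    omega

/-- `X` with `y_j` removed from every full leg `L_j` other than `L_i`. -/
def pruneFullLegs (X : Set (En n)) (i : Fin n) : Set (En n) :=
  {e ∈ X | e.2 = true ∨ e.1 = i ∨ (e.1, true) ∉ X}

lemma pruneFullLegs_subset (X : Set (En n)) (i : Fin n) : pruneFullLegs X i ⊆ X :=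
  fun _ he => he.1

lemma legCount_pruneFullLegs (X : Set (En n)) (i : Fin n) :
    legCount (pruneFullLegs X i) = legCount X := by
  refine le_antisymm (legCount_mono (pruneFullLegs_subset X i)) (legCount_le_legCount_of_forall ?_)
  rintro ⟨j, b⟩ he
  by_cases hj : (j, true) ∈ X
  · exact Or.inl ⟨hj, Or.inl rfl⟩
  · cases b
    · exact Or.inr ⟨he, Or.inr (Or.inr hj)⟩
    · exact absurd he hj

lemma fullLegs_pruneFullLegs {X : Set (En n)} {i : Fin n} (hi : i ∈ fullLegs X) :
    fullLegs (pruneFullLegs X i) = {i} := by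
  ext j
  simp only [fullLegs, pruneFullLegs, mem_ofPred_eq, mem_singleton_iff] at hi ⊢
  constructor
  · rintro ⟨⟨hjt, -⟩, hjf, hj⟩
    simpa [hjt] using hj
  · rintro rfl
    simp [hi]

section SpikeRank

variable {I : Set (Set (En n))} {M : Matroid (En n)} (hM : ∀ J, M.Indep J ↔ SpikeIndep I J)
  (hI : ∀ X ∈ I, IsTransversal X)
include hM hI

lemma mrank_eq_of_mem (hn : 0 < n) {X : Set (En n)} (hX : X ∈ I) : mrank M X = n - 1 := by
  have hXn := (hI X hX).ncard_eq
  apply mrank_eq_of_forall_le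
  · intro J hJ hJX
    have hJX' : J ⊂ X := hJX.ssubset_of_ne fun h => ((hM J).1 hJ).2.2 (h ▸ hX)
    have := ncard_lt_ncard hJX'
    omega
  · obtain ⟨J, hJX, hJ⟩ := exists_subset_card_eq (s := X) (n := n - 1) (by omega)
    refine ⟨J, (hM J).2 ⟨by omega, ?_, fun hJI => ?_⟩, hJX, hJ⟩
    · rw [eq_empty_of_subset_empty ((fullLegs_mono hJX).trans (hI X hX).fullLegs_eq_empty.subset)]
      simp
    · have := (hI J hJI).ncard_eq
      omega

lemma mrank_eq_of_notMem (hn : 2 ≤ n) {X : Set (En n)} (hX : X ∉ I) :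
    mrank M X = freeSpikeRank n X := by
  rw [freeSpikeRank_eq_min]
  have hXc := ncard_eq_legCount_add X
  apply mrank_eq_of_forall_le
  · intro J hJ hJX
    have hJ := (hM J).1 hJ
    have := hJ.ncard_le_legCount_add_one
    have := legCount_mono hJX
    have := ncard_le_ncard hJX
    have := hJ.1
    omega
  rcases (fullLegs X).eq_empty_or_nonempty with hF | ⟨i, hi⟩
  · rw [hF, ncard_empty] at hXc
    have := legCount_le X
    refine ⟨X, (hM X).2 ⟨by omega, by simp [hF], hX⟩, subset_rfl, by omega⟩
  · have hP := ncard_eq_legCount_add (pruneFullLegs X i)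
    rw [legCount_pruneFullLegs, fullLegs_pruneFullLegs hi, ncard_singleton] at hP
    have hlegP : leg n i ⊆ pruneFullLegs X i :=
      leg_subset_iff.2 (by simp [fullLegs_pruneFullLegs hi])
    have h2 := ncard_le_ncard hlegP
    have hPX := ncard_le_ncard (pruneFullLegs_subset X i)
    rw [ncard_leg] at h2
    obtain ⟨J, hlegJ, hJP, hJ⟩ := exists_subsuperset_card_eq hlegP
      (n := min n (min (legCount X + 1) X.ncard)) (by rw [ncard_leg]; omega) (by omega)
    refine ⟨J, (hM J).2 ⟨by omega, ?_, fun hJI => ?_⟩, hJP.trans (pruneFullLegs_subset X i), hJ⟩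
    · calc (fullLegs J).ncard ≤ (fullLegs (pruneFullLegs X i)).ncard :=
            ncard_le_ncard (fullLegs_mono hJP)
        _ = 1 := by rw [fullLegs_pruneFullLegs hi, ncard_singleton]
    · exact not_isTransversal_of_fullLegs_nonempty ⟨i, leg_subset_iff.1 hlegJ⟩ (hI J hJI)

end SpikeRank

open Classical in
theorem exists_matroid_mconn_eq (hn : 2 ≤ n) {I : Set (Set (En n))} (hI : IndepInHn n I)
    (lam : Set (En n) → ℕ) (hnt : ∀ X, ¬ IsTransversal X → (lam X : ℤ) = lamN n X)
    (ht : ∀ X, IsTransversal X →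
      lam X + (if X ∈ I then 1 else 0) + (if Xᶜ ∈ I then 1 else 0) = n) :
    ∃ M : Matroid (En n), M.E = univ ∧ ∀ X, (lam X : ℤ) = mconn M X := by
  obtain ⟨M, hE, hM⟩ := exists_matroid_indep_iff_spikeIndep (by omega) hI
  have hrank : ∀ X, mrank M X = if X ∈ I then n - 1 else freeSpikeRank n X := fun X => by
    split_ifs with hX
    exacts [mrank_eq_of_mem hM hI.1 (by omega) hX, mrank_eq_of_notMem hM hI.1 hn hX]
  have huniv : mrank M univ = n := by
    have hall : ∀ i : Fin n, (i, true) ∈ univ ∨ (i, false) ∈ univ := fun _ => Or.inl trivial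
    rw [hrank, if_neg fun h => ?_, freeSpikeRank_of_forall hall]
    obtain ⟨-, hfalse⟩ | ⟨htrue, -⟩ := hI.1 _ h ⟨0, by omega⟩
    exacts [hfalse trivial, htrue trivial]
  refine ⟨M, hE, fun X => ?_⟩
  rw [mconn, hE, ← compl_eq_univ_sdiff, huniv, hrank, hrank]
  by_cases hX : IsTransversal X
  · have := ht X hX
    rw [freeSpikeRank_of_forall fun i => (hX i).imp And.left And.right,
      freeSpikeRank_of_forall fun i => (hX.compl i).imp And.left And.right]
    split_ifs at this ⊢ <;> omega
  · have hXc : ¬ IsTransversal Xᶜ := fun h => hX (by simpa using h.compl)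
    rw [if_neg fun h => hX (hI.1 _ h), if_neg fun h => hXc (hI.1 _ h), hnt X hX, lamN]

def glamCompl {lam : Set (En n) → ℕ} (hsym : ∀ X, lam X = lam Xᶜ) : Glam n lam →g Glam n lam where
  toFun := compl
  map_rel' := fun ⟨⟨hX, hY, hXY⟩, hlX, hlY⟩ =>
    ⟨⟨hX.compl, hY.compl, by rwa [compl_symmDiff_compl]⟩, (hsym _).symm.trans hlX,
      (hsym _).symm.trans hlY⟩

open Classical in
theorem exists_indepInHn_of_not_reachable (hn : 2 ≤ n) (heven : Even n) {lam : Set (En n) → ℕ}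
    (hs : IsSpiky n lam) (h : ∀ X, IsTransversal X → ¬ (Glam n lam).Reachable X Xᶜ) :
    ∃ I, IndepInHn n I ∧ ∀ X, IsTransversal X →
      lam X + (if X ∈ I then 1 else 0) + (if Xᶜ ∈ I then 1 else 0) = n := by
  obtain ⟨hsym, -, hval, hadj⟩ := hs
  obtain ⟨side, hside_adj, hside_compl⟩ :=
    SimpleGraph.exists_side_of_involutive (glamCompl hsym) compl_compl
  let I := {X | IsTransversal X ∧
    (lam X = n - 2 ∨ lam X = n - 1 ∧ (Even (trueLegs X).ncard ↔ side X))}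
  refine ⟨I, ⟨fun X hX => hX.1, ?_⟩, fun X hX => ?_⟩
  · rintro X ⟨-, hXI⟩ Y ⟨-, hYI⟩ hXY
    have hsum := hadj X Y hXY.1 hXY.2.1 hXY.2.2
    have hpar := even_ncard_trueLegs_iff_of_adj hXY
    rcases hXI with hX | ⟨hX, hXs⟩ <;> rcases hYI with hY | ⟨hY, hYs⟩ <;> try omega
    have := hside_adj X Y ⟨hXY, hX, hY⟩
    tauto
  · have hpar := even_ncard_trueLegs_compl heven X
    have hs : side Xᶜ ↔ ¬ side X := hside_compl X (h X hX)
    have hXI : X ∈ I ↔ _ := and_iff_right hX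
    have hXcI : Xᶜ ∈ I ↔ _ := and_iff_right hX.compl
    rw [← hsym X, hpar, hs] at hXcI
    have h21 : n - 2 ≠ n - 1 := by omega
    have h20 : n ≠ n - 2 := by omega
    have h10 : n ≠ n - 1 := by omega
    rcases hval X hX with hl | hl | hl <;> simp only [hl, h21, h21.symm, h20, h10,
      false_or, false_and, true_and, or_false, iff_true, iff_false] at hXI hXcI ⊢
    · rw [if_pos hXI, if_pos hXcI]
      omega
    · by_cases hp : Even (trueLegs X).ncard ↔ side X
      · rw [if_pos (hXI.2 hp), if_neg fun hc => by tauto]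
        omega
      · rw [if_neg fun hc => hp (hXI.1 hc), if_pos (hXcI.2 (by tauto))]
        omega
    · rw [if_neg hXI, if_neg hXcI]
      omega

/-- For even `n`, if no transversal `X` has `X` and `E_n − X` in the same component of
`G_λ`, then the spiky function `λ` is the connectivity function of a matroid. -/
theorem stmt15 {n : ℕ} (hn : 2 < n) (heven : Even n)
    (lam : Set (En n) → ℕ) (hs : IsSpiky n lam)
    (h : ∀ X, IsTransversal X → ¬ (Glam n lam).Reachable X Xᶜ) :
    ∃ M : Matroid (En n), M.E = Set.univ ∧ ∀ X, (lam X : ℤ) = mconn M X := by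
  obtain ⟨I, hI, hlam⟩ := exists_indepInHn_of_not_reachable hn.le heven hs h
  exact exists_matroid_mconn_eq hn.le hI lam hs.2.1 hlam
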